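/- Let φ be an LTLf formula in NNF over atoms P and ρ a finite trace (possibly empty). Extend formula progression to traces by fp(φ, ε) = φ and fp(φ, σu) = fp(fp(φ, σ), u) for σ ∈ 2^P and u ∈ (2^P)*. Then ρ ⊨ φ if and only if the empty trace satisfies fp(φ, ρ), i.e., ε ⊨ fp(φ, ρ). -/
import Mathlib


namespace LTLfSynth

open scoped Classical

/-- LTLf formulas in negation normal form. -/
inductive LTLf (P : Type*) where
  | tt : LTLf P
  | ff : LTLf P
  | atom : P → LTLf P
  | natom : P → LTLf P
  | and : LTLf P → LTLf P → LTLf P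
  | or : LTLf P → LTLf P → LTLf P
  | next : LTLf P → LTLf P
  | wnext : LTLf P → LTLf P
  | until_ : LTLf P → LTLf P → LTLf P
  | release : LTLf P → LTLf P → LTLf P

variable {P : Type*}

/-- ◇true -/
def diamondTrue : LTLf P := .until_ .tt .tt

/-- □false -/
def boxFalse : LTLf P := .release .ff .ff

/-- Finite-trace satisfaction `ρ, i ⊨ φ`, where position `ρ.length` (and beyond)
corresponds to the empty suffix (empty-trace semantics). -/
def Sat (ρ : List (Set P)) : LTLf P → ℕ → Prop
  | .tt, _ => True
  | .ff, _ => False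
  | .atom p, i => i < ρ.length ∧ p ∈ ρ.getD i ∅
  | .natom p, i => i < ρ.length ∧ p ∉ ρ.getD i ∅
  | .and φ ψ, i => Sat ρ φ i ∧ Sat ρ ψ i
  | .or φ ψ, i => Sat ρ φ i ∨ Sat ρ ψ i
  | .next φ, i => i + 1 < ρ.length ∧ Sat ρ φ (i + 1)
  | .wnext φ, i => i + 1 < ρ.length → Sat ρ φ (i + 1)
  | .until_ φ ψ, i =>
      ∃ j, i ≤ j ∧ j < ρ.length ∧ Sat ρ ψ j ∧ ∀ k, i ≤ k → k < j → Sat ρ φ k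
  | .release φ ψ, i =>
      ∀ j, i ≤ j → j < ρ.length → (Sat ρ ψ j ∨ ∃ k, i ≤ k ∧ k < j ∧ Sat ρ φ k)

/-- Single-step formula progression `fp σ φ = fp(φ, σ)`. -/
noncomputable def fp (σ : Set P) : LTLf P → LTLf P
  | .tt => .tt
  | .ff => .ff
  | .atom p => if p ∈ σ then .tt else .ff
  | .natom p => if p ∈ σ then .ff else .tt
  | .and φ ψ => .and (fp σ φ) (fp σ ψ)
  | .or φ ψ => .or (fp σ φ) (fp σ ψ)
  | .next φ => .and φ diamondTrue
  | .wnext φ => .or φ boxFalse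
  | .until_ .tt .tt => .tt
  | .until_ φ ψ => .or (fp σ ψ) (.and (fp σ φ) (.and (.until_ φ ψ) diamondTrue))
  | .release .ff .ff => .ff
  | .release φ ψ => .and (fp σ ψ) (.or (fp σ φ) (.or (.release φ ψ) boxFalse))

/-- Progression extended to finite traces: `fpTrace φ ε = φ`, `fpTrace φ (σu) = fpTrace (fp σ φ) u`. -/
noncomputable def fpTrace : LTLf P → List (Set P) → LTLf P
  | φ, [] => φ
  | φ, σ :: u => fpTrace (fp σ φ) u

lemma sat_diamondTrue (u : List (Set P)) (i : ℕ) :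
    Sat u (diamondTrue : LTLf P) i ↔ i < u.length := by
  simp only [diamondTrue, Sat]
  constructor
  · rintro ⟨j, h1, h2, -⟩; omega
  · intro h; exact ⟨i, le_rfl, h, trivial, fun k _ _ => trivial⟩

lemma sat_boxFalse (u : List (Set P)) (i : ℕ) :
    Sat u (boxFalse : LTLf P) i ↔ u.length ≤ i := by
  simp only [boxFalse, Sat]
  constructor
  · intro h
    by_contra hlt
    rcases h i le_rfl (by omega) with h | ⟨k, _, _, hk⟩
    · exact h
    · exact hk
  · intro h j h1 h2; omega

/-- Shift lemma. -/
lemma sat_shift (σ : Set P) (u : List (Set P)) (φ : LTLf P) :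
    ∀ i, Sat (σ :: u) φ (i + 1) ↔ Sat u φ i := by
  induction φ with
  | tt => intro i; simp [Sat]
  | ff => intro i; simp [Sat]
  | atom p => intro i; simp [Sat]
  | natom p => intro i; simp [Sat]
  | and φ ψ ihφ ihψ => intro i; simp [Sat, ihφ, ihψ]
  | or φ ψ ihφ ihψ => intro i; simp [Sat, ihφ, ihψ]
  | next φ ih =>
      intro i; simp only [Sat, ih (i + 1), List.length_cons]
      constructor
      · rintro ⟨h1, h2⟩; exact ⟨by omega, h2⟩
      · rintro ⟨h1, h2⟩; exact ⟨by omega, h2⟩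
  | wnext φ ih =>
      intro i; simp only [Sat, ih (i + 1), List.length_cons]
      constructor
      · intro h h'; exact h (by omega)
      · intro h h'; exact h (by omega)
  | until_ φ ψ ihφ ihψ =>
      intro i
      simp only [Sat]
      constructor
      · rintro ⟨j, h1, h2, hψ, hk⟩
        obtain ⟨j', rfl⟩ : ∃ j', j = j' + 1 := ⟨j - 1, by omega⟩
        refine ⟨j', by omega, by simpa using h2, (ihψ j').mp hψ, fun k hk1 hk2 => ?_⟩
        exact (ihφ k).mp (hk (k + 1) (by omega) (by omega))
      · rintro ⟨j, h1, h2, hψ, hk⟩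
        refine ⟨j + 1, by omega, by simpa using h2, (ihψ j).mpr hψ, fun k hk1 hk2 => ?_⟩
        obtain ⟨k', rfl⟩ : ∃ k', k = k' + 1 := ⟨k - 1, by omega⟩
        exact (ihφ k').mpr (hk k' (by omega) (by omega))
  | release φ ψ ihφ ihψ =>
      intro i
      simp only [Sat]
      constructor
      · intro h j hj1 hj2
        rcases h (j + 1) (by omega) (by simpa using hj2) with h' | ⟨k, hk1, hk2, hφ⟩
        · exact Or.inl ((ihψ j).mp h')
        · obtain ⟨k', rfl⟩ : ∃ k', k = k' + 1 := ⟨k - 1, by omega⟩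
          exact Or.inr ⟨k', by omega, by omega, (ihφ k').mp hφ⟩
      · intro h j hj1 hj2
        obtain ⟨j', rfl⟩ : ∃ j', j = j' + 1 := ⟨j - 1, by omega⟩
        rcases h j' (by omega) (by simpa using hj2) with h' | ⟨k, hk1, hk2, hφ⟩
        · exact Or.inl ((ihψ j').mpr h')
        · exact Or.inr ⟨k + 1, by omega, by omega, (ihφ k).mpr hφ⟩

lemma until_unfold (σ : Set P) (u : List (Set P)) (φ ψ : LTLf P) :
    Sat (σ :: u) (.until_ φ ψ) 0 ↔
      Sat (σ :: u) ψ 0 ∨ (Sat (σ :: u) φ 0 ∧ Sat (σ :: u) (.until_ φ ψ) 1) := by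
  constructor
  · rintro ⟨j, -, hj, hψ, hk⟩
    rcases Nat.eq_zero_or_pos j with rfl | hj0
    · exact Or.inl hψ
    · exact Or.inr ⟨hk 0 (Nat.zero_le _) hj0,
        j, hj0, hj, hψ, fun k h1 h2 => hk k (Nat.zero_le _) h2⟩
  · rintro (h | ⟨hφ, j, h1, hj, hψ, hk⟩)
    · exact ⟨0, le_rfl, Nat.succ_pos _, h, fun k _ h2 => (Nat.not_lt_zero k h2).elim⟩
    · refine ⟨j, Nat.zero_le _, hj, hψ, fun k _ h2 => ?_⟩
      rcases Nat.eq_zero_or_pos k with rfl | hk0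
      · exact hφ
      · exact hk k hk0 h2

lemma release_unfold (σ : Set P) (u : List (Set P)) (φ ψ : LTLf P) :
    Sat (σ :: u) (.release φ ψ) 0 ↔
      Sat (σ :: u) ψ 0 ∧ (Sat (σ :: u) φ 0 ∨ Sat (σ :: u) (.release φ ψ) 1) := by
  constructor
  · intro h
    rcases h 0 le_rfl (by simp) with hψ | ⟨k, _, hk, _⟩
    swap
    · omega
    refine ⟨hψ, ?_⟩
    by_cases hφ : Sat (σ :: u) φ 0
    · exact Or.inl hφ
    · refine Or.inr fun j h1 hj => ?_
      rcases h j (Nat.zero_le _) hj with hj' | ⟨k, _, hk2, hφk⟩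
      · exact Or.inl hj'
      · rcases Nat.eq_zero_or_pos k with rfl | hk0
        · exact absurd hφk hφ
        · exact Or.inr ⟨k, hk0, hk2, hφk⟩
  · rintro ⟨hψ, hrest⟩ j _ hj
    rcases Nat.eq_zero_or_pos j with rfl | hj0
    · exact Or.inl hψ
    · rcases hrest with hφ | hR
      · exact Or.inr ⟨0, le_rfl, hj0, hφ⟩
      · rcases hR j hj0 hj with h | ⟨k, hk1, hk2, hφk⟩
        · exact Or.inl h
        · exact Or.inr ⟨k, Nat.zero_le _, hk2, hφk⟩

/-- Semantics of `fp` on an until formula. -/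
lemma sat_fp_until (σ : Set P) (u : List (Set P)) (φ ψ : LTLf P) (i : ℕ) :
    Sat u (fp σ (.until_ φ ψ)) i ↔
      Sat u (fp σ ψ) i ∨
        (Sat u (fp σ φ) i ∧ Sat u (.until_ φ ψ) i ∧ Sat u (diamondTrue : LTLf P) i) := by
  cases φ <;> cases ψ <;>
    first
      | exact Iff.rfl
      | exact iff_of_true trivial (Or.inl trivial)

/-- Semantics of `fp` on a release formula. -/
lemma sat_fp_release (σ : Set P) (u : List (Set P)) (φ ψ : LTLf P) (i : ℕ) :
    Sat u (fp σ (.release φ ψ)) i ↔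
      Sat u (fp σ ψ) i ∧
        (Sat u (fp σ φ) i ∨ Sat u (.release φ ψ) i ∨ Sat u (boxFalse : LTLf P) i) := by
  cases φ <;> cases ψ <;>
    first
      | exact Iff.rfl
      | exact iff_of_false id (fun h => h.1)

/-- Single-step correctness of progression. -/
lemma sat_fp_step (σ : Set P) (u : List (Set P)) (φ : LTLf P) :
    Sat (σ :: u) φ 0 ↔ Sat u (fp σ φ) 0 := by
  induction φ with
  | tt => simp [Sat, fp]
  | ff => simp [Sat, fp]
  | atom p =>
      by_cases h : p ∈ σ <;> simp [Sat, fp, h]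
  | natom p =>
      by_cases h : p ∈ σ <;> simp [Sat, fp, h]
  | and φ ψ ihφ ihψ => simp only [Sat, fp, ihφ, ihψ]
  | or φ ψ ihφ ihψ => simp only [Sat, fp, ihφ, ihψ]
  | next φ ih =>
      show (0 + 1 < (σ :: u).length ∧ Sat (σ :: u) φ (0 + 1)) ↔
        Sat u φ 0 ∧ Sat u (diamondTrue : LTLf P) 0
      rw [sat_shift σ u φ 0, sat_diamondTrue]
      simp only [List.length_cons]
      constructor
      · rintro ⟨h1, h2⟩; exact ⟨h2, by omega⟩
      · rintro ⟨h1, h2⟩; exact ⟨by omega, h1⟩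
  | wnext φ ih =>
      show (0 + 1 < (σ :: u).length → Sat (σ :: u) φ (0 + 1)) ↔
        Sat u φ 0 ∨ Sat u (boxFalse : LTLf P) 0
      rw [sat_shift σ u φ 0, sat_boxFalse]
      simp only [List.length_cons]
      constructor
      · intro h
        by_cases h0 : 0 < u.length
        · exact Or.inl (h (by omega))
        · exact Or.inr (by omega)
      · rintro (h | h) h'
        · exact h
        · omega
  | until_ φ ψ ihφ ihψ =>
      rw [until_unfold, sat_fp_until, ihφ, ihψ, sat_shift σ u _ 0, sat_diamondTrue]
      constructor
      · rintro (h | ⟨h1, h2⟩)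
        · exact Or.inl h
        · refine Or.inr ⟨h1, h2, ?_⟩
          obtain ⟨j, -, hj, -⟩ := h2
          omega
      · rintro (h | ⟨h1, h2, -⟩)
        · exact Or.inl h
        · exact Or.inr ⟨h1, h2⟩
  | release φ ψ ihφ ihψ =>
      rw [release_unfold, sat_fp_release, ihφ, ihψ, sat_shift σ u _ 0, sat_boxFalse]
      constructor
      · rintro ⟨h1, h2⟩
        refine ⟨h1, ?_⟩
        rcases h2 with h | h
        · exact Or.inl h
        · exact Or.inr (Or.inl h)
      · rintro ⟨h1, h2⟩
        refine ⟨h1, ?_⟩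
        rcases h2 with h | h | h
        · exact Or.inl h
        · exact Or.inr h
        · refine Or.inr fun j hj1 hj2 => ?_
          omega

/-- `ρ ⊨ φ` iff the empty trace satisfies `fp(φ, ρ)`. -/
theorem fp_trace_correct (φ : LTLf P) (ρ : List (Set P)) :
    Sat ρ φ 0 ↔ Sat ([] : List (Set P)) (fpTrace φ ρ) 0 := by
  induction ρ generalizing φ with
  | nil => rfl
  | cons σ u ih => rw [sat_fp_step, fpTrace, ih]

end LTLfSynth
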